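/- For all functions f : (ZMod 3)^K → ℂ and g : (ZMod 3)^L → ℂ, under the 4NAT test distribution one has E[f(x)·g(y)·g(z)] = ∑_{α ∈ (ZMod 3)^L} f̂(π₃(α))·ĝ(α)²·(−1/2)^{#α}. -/

import Mathlib

open Finset

noncomputable def ω : ℂ := Complex.exp (2 * (Real.pi : ℂ) * Complex.I / 3)

/-- Fourier coefficient `f̂(α) = E_x[f(x) ω^{-α·x}]`. -/
noncomputable def fCoeff {ι : Type} [Fintype ι] [DecidableEq ι] (f : (ι → ZMod 3) → ℂ)
    (α : ι → ZMod 3) : ℂ :=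
  (∑ x : ι → ZMod 3, f x * ω ^ ((-(∑ i, α i * x i)).val)) / 3 ^ (Fintype.card ι)

/-- The TwoPair predicate: the four inputs take exactly two distinct values,
each occurring exactly twice. -/
def TwoPair (a : Fin 4 → ZMod 3) : Prop :=
  ∃ b c : ZMod 3, b ≠ c ∧
    (univ.filter fun i => a i = b).card = 2 ∧
    (univ.filter fun i => a i = c).card = 2

-- Expectation of a complex-valued function of `(x, y, z, w)` under the 4NAT
-- test distribution with parameters `d`, `K` (coordinates `j ∈ [L]`, `L = dK`,
-- are encoded as pairs `(i, j') ∈ Fin K × Fin d` with block `π(j) = i`).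
open Classical in
noncomputable def natTestExpC (d K : ℕ)
    (h : (Fin K → ZMod 3) → ((Fin K × Fin d) → ZMod 3) →
         ((Fin K × Fin d) → ZMod 3) → ((Fin K × Fin d) → ZMod 3) → ℂ) : ℂ :=
  (∑ x : Fin K → ZMod 3, ∑ y : (Fin K × Fin d) → ZMod 3,
    ∑ z : (Fin K × Fin d) → ZMod 3, ∑ w : (Fin K × Fin d) → ZMod 3,
      (if ∀ j : Fin K × Fin d, TwoPair ![x j.1, y j, z j, w j] then 1 else 0)
        * h x y z w)
    / (3 ^ K * 6 ^ (d * K))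

/-!
Summing out `w`: for fixed `a b c : ZMod 3` exactly one `u` makes `(a, b, c, u)` a TwoPair when
`a + b + c ≠ 0`, and none otherwise. So the left side averages `f x g y g z` against
`∏_J [x_{π J} + y_J + z_J ≠ 0]`. Expanding the Fourier coefficients, the right side averages the
same product against `∑_α ω^{-∑_J α_J s_J} ∏_J ρ(α_J)` with `s_J = x_{π J} + y_J + z_J`,
`ρ(0) = 1` and `ρ(t) = -1/2` otherwise. This sum factorises over `J`, and since
`ρ = -1/2 + (3/2)·[t = 0]`, orthogonality of characters evaluates each factor to `(3/2)·[s_J ≠ 0]`.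
-/

lemma AddChar.map_sum_eq_prod {ι A M : Type*} [AddCommMonoid A] [CommMonoid M] (ψ : AddChar A M)
    (s : Finset ι) (f : ι → A) : ψ (∑ i ∈ s, f i) = ∏ i ∈ s, ψ (f i) := by
  classical
  induction s using Finset.induction_on with
  | empty => simp
  | insert a s ha ih => rw [sum_insert ha, prod_insert ha, map_add_eq_mul, ih]

lemma Fintype.prod_ite_eq_zero_one_pow_card {ι R M : Type*} [Fintype ι] [Zero R] [DecidableEq R]
    [CommMonoid M] (α : ι → R) (c : M) :
    ∏ J, (if α J = 0 then 1 else c) = c ^ #{J | α J ≠ 0} := by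
  simp [Finset.prod_ite]

lemma isPrimitiveRoot_ω : IsPrimitiveRoot ω 3 := by
  convert Complex.isPrimitiveRoot_exp 3 (by norm_num) using 2
  simp [ω]

noncomputable def omegaChar : AddChar (ZMod 3) ℂ :=
  AddChar.zmodChar 3 isPrimitiveRoot_ω.pow_eq_one

lemma omegaChar_apply (t : ZMod 3) : omegaChar t = ω ^ t.val :=
  AddChar.zmodChar_apply _ t

lemma sum_omegaChar_mul (u : ZMod 3) :
    ∑ t : ZMod 3, omegaChar (t * u) = if u = 0 then 3 else 0 := by
  simpa [omegaChar] using AddChar.sum_mulShift u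
    (AddChar.zmodChar_primitive_of_primitive_root 3 isPrimitiveRoot_ω)

lemma sum_omegaChar_neg_mul_mul_ite (u : ZMod 3) :
    ∑ t : ZMod 3, omegaChar (-(t * u)) * (if t = 0 then 1 else -(1 / 2) : ℂ)
      = 3 / 2 * if u = 0 then 0 else 1 := by
  have hweight : ∀ t : ZMod 3, omegaChar (-(t * u)) * (if t = 0 then 1 else -(1 / 2) : ℂ)
      = -(1 / 2) * omegaChar (t * -u) + 3 / 2 * if t = 0 then 1 else 0 := by
    intro t
    split_ifs with ht
    · simp only [ht, zero_mul, neg_zero, AddChar.map_zero_eq_one]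
      norm_num
    · rw [mul_neg t u]
      ring
  simp only [hweight, sum_add_distrib, ← mul_sum, sum_omegaChar_mul, neg_eq_zero, sum_ite_eq',
    mem_univ]
  split_ifs <;> norm_num

lemma sum_omegaChar_neg_dot_mul_prod_ite {ι : Type*} [Fintype ι] [DecidableEq ι]
    (s : ι → ZMod 3) :
    ∑ α : ι → ZMod 3, omegaChar (-∑ J, α J * s J) * ∏ J, (if α J = 0 then 1 else -(1 / 2) : ℂ)
      = (3 / 2) ^ Fintype.card ι * ∏ J, (if s J = 0 then 0 else 1 : ℂ) := by
  rw [← Finset.card_univ, ← prod_const, ← prod_mul_distrib]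
  simp only [← sum_omegaChar_neg_mul_mul_ite, Fintype.prod_sum, ← prod_mul_distrib,
    ← sum_neg_distrib, AddChar.map_sum_eq_prod]

lemma fCoeff_eq_sum_omegaChar {ι : Type} [Fintype ι] [DecidableEq ι] (f : (ι → ZMod 3) → ℂ)
    (α : ι → ZMod 3) :
    fCoeff f α = (∑ x, f x * omegaChar (-∑ i, α i * x i)) / 3 ^ Fintype.card ι := by
  simp only [fCoeff, omegaChar_apply]

lemma fCoeff_mul_fCoeff_mul_fCoeff {κ ι ι' : Type} [Fintype κ] [DecidableEq κ] [Fintype ι]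
    [DecidableEq ι] [Fintype ι'] [DecidableEq ι'] (f : (κ → ZMod 3) → ℂ)
    (g : (ι → ZMod 3) → ℂ) (h : (ι' → ZMod 3) → ℂ) (β : κ → ZMod 3) (α : ι → ZMod 3)
    (γ : ι' → ZMod 3) :
    fCoeff f β * fCoeff g α * fCoeff h γ
      = (∑ x, ∑ y, ∑ z, f x * g y * h z *
          omegaChar (-(∑ i, β i * x i + ∑ j, α j * y j + ∑ k, γ k * z k)))
        / (3 ^ Fintype.card κ * 3 ^ Fintype.card ι * 3 ^ Fintype.card ι') := by
  simp only [fCoeff_eq_sum_omegaChar, div_mul_div_comm, sum_mul_sum]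
  simp only [sum_mul]
  congr 1
  refine sum_congr rfl fun x _ => ?_
  rw [sum_comm]
  refine sum_congr rfl fun y _ => sum_congr rfl fun z _ => ?_
  rw [neg_add, neg_add, AddChar.map_add_eq_mul, AddChar.map_add_eq_mul]
  ring

lemma sum_fCoeff_blockSum_mul_fCoeff_sq_mul_pow_card {κ δ : Type} [Fintype κ] [DecidableEq κ]
    [Fintype δ] [DecidableEq δ] (f : (κ → ZMod 3) → ℂ) (g : (κ × δ → ZMod 3) → ℂ) :
    ∑ α : κ × δ → ZMod 3, fCoeff f (fun i => ∑ j, α (i, j)) * fCoeff g α ^ 2 *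
        (-(1 / 2) : ℂ) ^ #{J | α J ≠ 0}
      = (3 / 2) ^ Fintype.card (κ × δ) * (∑ x, ∑ y, ∑ z, f x * g y * g z *
          ∏ J : κ × δ, (if x J.1 + y J + z J = 0 then 0 else 1 : ℂ))
        / (3 ^ Fintype.card κ * 3 ^ Fintype.card (κ × δ) * 3 ^ Fintype.card (κ × δ)) := by
  have hphase : ∀ (α : κ × δ → ZMod 3) (x : κ → ZMod 3) (y z : κ × δ → ZMod 3),
      ∑ i, (∑ j, α (i, j)) * x i + ∑ J, α J * y J + ∑ J, α J * z J
        = ∑ J, α J * (x J.1 + y J + z J) := by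
    intro α x y z
    simp only [sum_mul, Fintype.sum_prod_type, ← sum_add_distrib, mul_add]
  simp only [pow_two, ← mul_assoc, fCoeff_mul_fCoeff_mul_fCoeff, hphase,
    ← Fintype.prod_ite_eq_zero_one_pow_card, div_mul_eq_mul_div, ← sum_div]
  congr 1
  simp only [sum_mul, mul_sum]
  rw [sum_comm]
  refine sum_congr rfl fun x _ => ?_
  rw [sum_comm]
  refine sum_congr rfl fun y _ => ?_
  rw [sum_comm]
  refine sum_congr rfl fun z _ => ?_
  rw [mul_left_comm, ← sum_omegaChar_neg_dot_mul_prod_ite, mul_sum]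
  simp only [mul_assoc]

instance : DecidablePred TwoPair := fun _ => by unfold TwoPair; infer_instance

lemma card_filter_twoPair (a b c : ZMod 3) :
    #{u | TwoPair ![a, b, c, u]} = if a + b + c = 0 then 0 else 1 := by
  revert a b c
  decide

lemma natTestExpC_eq_sum (d K : ℕ) (F : (Fin K → ZMod 3) → ((Fin K × Fin d) → ZMod 3) →
      ((Fin K × Fin d) → ZMod 3) → ℂ) :
    natTestExpC d K (fun x y z _ => F x y z)
      = (∑ x, ∑ y, ∑ z, F x y z * ∏ J : Fin K × Fin d,
          (if x J.1 + y J + z J = 0 then 0 else 1 : ℂ)) / (3 ^ K * 6 ^ (d * K)) := by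
  unfold natTestExpC
  refine congrArg (· / _) ?_
  refine sum_congr rfl fun x _ => sum_congr rfl fun y _ => sum_congr rfl fun z _ => ?_
  rw [← sum_mul, mul_comm]
  refine congrArg (F x y z * ·) ?_
  have hcount : ∀ J : Fin K × Fin d, (if x J.1 + y J + z J = 0 then 0 else 1 : ℂ)
      = ∑ u, if TwoPair ![x J.1, y J, z J, u] then 1 else 0 := by
    intro J
    rw [sum_boole, card_filter_twoPair]
    split_ifs <;> simp
  rw [prod_congr rfl fun J _ => hcount J, Fintype.prod_sum]
  -- `natTestExpC` was elaborated with classical decidability instances, hence `convert`.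
  convert rfl using 2 with w
  rw [Fintype.prod_boole]
  congr

theorem fourier_formula_fgg_general (d K : ℕ)
    (f : (Fin K → ZMod 3) → ℂ) (g : ((Fin K × Fin d) → ZMod 3) → ℂ) :
    natTestExpC d K (fun x y z _w => f x * g y * g z)
      = ∑ α : (Fin K × Fin d) → ZMod 3,
          fCoeff f (fun i => ∑ j : Fin d, α (i, j)) * (fCoeff g α) ^ 2 *
            (-(1 / 2) : ℂ) ^ (univ.filter fun j => α j ≠ 0).card := by
  rw [natTestExpC_eq_sum, sum_fCoeff_blockSum_mul_fCoeff_sq_mul_pow_card]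
  simp only [Fintype.card_prod, Fintype.card_fin]
  have hnorm : (3 : ℂ) ^ (K * d) * 3 ^ (K * d) = (3 / 2) ^ (K * d) * 6 ^ (d * K) := by
    rw [mul_comm d K, ← mul_pow, ← mul_pow]
    norm_num
  rw [mul_assoc _ (3 ^ (K * d)), hnorm]
  field_simp

theorem fourier_formula_fgg (d K : ℕ) (hd : 0 < d) (hK : 0 < K)
    (f : (Fin K → ZMod 3) → ℂ) (g : ((Fin K × Fin d) → ZMod 3) → ℂ) :
    natTestExpC d K (fun x y z _w => f x * g y * g z)
      = ∑ α : (Fin K × Fin d) → ZMod 3,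
          fCoeff f (fun i => ∑ j : Fin d, α (i, j)) * (fCoeff g α) ^ 2 *
            (-(1 / 2) : ℂ) ^ (univ.filter fun j => α j ≠ 0).card :=
  fourier_formula_fgg_general d K f g
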